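/- For x, y ∈ ℝ^d and ω ~ N(0, I_d), exp(x^⊤ y) = exp(-(‖x‖²+‖y‖²)/2) · E[cosh(ω^⊤(x+y))]. -/

import Mathlib

/-! Since `cosh` is the average of `exp` and `exp ∘ neg`, the Gaussian integral of
`cosh ⟪ω, z⟫` equals the moment generating function `exp (‖z‖² / 2)` of `⟪ω, z⟫`, which
factors over the independent coordinates of `ω`. Taking `z = x + y` and expanding
`‖x + y‖² = ‖x‖² + ‖y‖² + 2 ⟪x, y⟫` gives the identity. -/

open MeasureTheory ProbabilityTheory

noncomputable def stdGaussian (d : ℕ) : Measure (Fin d → ℝ) :=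
  Measure.pi fun _ => gaussianReal 0 1

def dotR {d : ℕ} (u v : Fin d → ℝ) : ℝ := ∑ i, u i * v i

open Real

lemma integral_exp_mul_gaussianReal (μ : ℝ) (v : NNReal) (t : ℝ) :
    ∫ x, exp (t * x) ∂gaussianReal μ v = exp (μ * t + v * t ^ 2 / 2) :=
  congrFun mgf_fun_id_gaussianReal t

section DotProduct

variable {d : ℕ}

lemma dotR_neg_right (u v : Fin d → ℝ) : dotR u (-v) = -dotR u v := by
  simp [dotR]

lemma sum_add_sq_eq (x y : Fin d → ℝ) :
    ∑ i, (x + y) i ^ 2 = (∑ i, x i ^ 2) + (∑ i, y i ^ 2) + 2 * dotR x y := by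
  simp only [dotR, Pi.add_apply, Finset.mul_sum, ← Finset.sum_add_distrib]
  exact Finset.sum_congr rfl fun i _ => by ring

lemma exp_dotR_eq_prod (ω z : Fin d → ℝ) : exp (dotR ω z) = ∏ i, exp (z i * ω i) := by
  simp only [dotR, exp_sum, mul_comm]

end DotProduct

section StdGaussian

variable {d : ℕ}

lemma integrable_exp_dotR_stdGaussian (z : Fin d → ℝ) :
    Integrable (fun ω => exp (dotR ω z)) (stdGaussian d) := by
  simp only [exp_dotR_eq_prod]
  exact .fintype_prod fun i => integrable_exp_mul_gaussianReal (z i)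

lemma integral_exp_dotR_stdGaussian (z : Fin d → ℝ) :
    ∫ ω, exp (dotR ω z) ∂stdGaussian d = exp ((∑ i, z i ^ 2) / 2) := by
  simp only [exp_dotR_eq_prod, _root_.stdGaussian]
  rw [integral_fintype_prod_eq_prod (fun i x => exp (z i * x))]
  simp [integral_exp_mul_gaussianReal, ← exp_sum, Finset.sum_div]

lemma integral_cosh_dotR_stdGaussian (z : Fin d → ℝ) :
    ∫ ω, cosh (dotR ω z) ∂stdGaussian d = exp ((∑ i, z i ^ 2) / 2) := by
  have hcosh : ∀ ω, cosh (dotR ω z) = (exp (dotR ω z) + exp (dotR ω (-z))) / 2 := fun ω => by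
    rw [cosh_eq, dotR_neg_right]
  simp only [hcosh, integral_div]
  rw [integral_add (integrable_exp_dotR_stdGaussian z) (integrable_exp_dotR_stdGaussian (-z)),
    integral_exp_dotR_stdGaussian, integral_exp_dotR_stdGaussian]
  simp

end StdGaussian

theorem stmt3 (d : ℕ) (x y : Fin d → ℝ) :
    Real.exp (dotR x y)
      = Real.exp (-((∑ i, x i ^ 2) + (∑ i, y i ^ 2)) / 2) *
        ∫ ω, Real.cosh (dotR ω (x + y)) ∂ stdGaussian d := by
  rw [integral_cosh_dotR_stdGaussian, sum_add_sq_eq, ← exp_add]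
  congr 1
  ring
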